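/- Suppose D satisfies Conditions (A) and (B), U is a penalty function for D with constant L, w : [0,T] → ℝ^d is α-Hölder continuous with w₀ = 0, x₀ ∈ D̄, and m ≥ 1 is an integer with 0 < ε_m^α(w) < r₀/2. Then for every integer m' ≥ m and every t ∈ [0,T], dist(ξ^{m'}_t, D̄) < ε_m^α(w). -/

import Mathlib

/-!
Near `D̄` the penalty is `U = dist(·, D̄)²`; since `U` touches `‖· - p‖²` from below at `x`
(`p` a nearest point of `D̄`), `∇U(x) = 2 (x - p)`. As long as `ξ` stays in the `ε`-tube,
freezing the gradient over a window of length `Δ = θ / m'` therefore gives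
`dist(ξ_t, D̄) ≤ (1 - m' (t - s)) dist(ξ_s, D̄) + B`, where `B = X + L θ (X + θ ε)` collects the
Hölder increment `X = ‖w‖_α Δ^α` of the noise and the Lipschitz error of `∇U`. Iterating along a
grid of mesh `Δ` yields `dist(ξ_t, D̄) ≤ B / θ + B`, which is `< ε` for `θ = 1 / (2 (L + 1))`,
so `ξ` can never reach the edge of the tube.
-/

open Set Metric MeasureTheory Filter

noncomputable section

abbrev Euc (d : ℕ) := EuclideanSpace ℝ (Fin d)

/-- The set 𝒩_{x,r} of inward unit normals at `x` with radius `r`. -/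
def nset {d : ℕ} (D : Set (Euc d)) (x : Euc d) (r : ℝ) : Set (Euc d) :=
  {n : Euc d | ‖n‖ = 1 ∧ Metric.ball (x - r • n) r ∩ D = ∅}

/-- The set 𝒩_x = ⋃_{r>0} 𝒩_{x,r}. -/
def nsetAll {d : ℕ} (D : Set (Euc d)) (x : Euc d) : Set (Euc d) :=
  ⋃ r ∈ Set.Ioi (0 : ℝ), nset D x r

/-- Condition (A): uniform exterior sphere condition with radius `r₀`. -/
def CondA {d : ℕ} (D : Set (Euc d)) (r₀ : ℝ) : Prop :=
  0 < r₀ ∧ ∀ x ∈ frontier D, nsetAll D x = nset D x r₀ ∧ (nset D x r₀).Nonempty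

/-- Condition (B): local uniform interior cone-type condition with constants `δ`, `β`. -/
def CondB {d : ℕ} (D : Set (Euc d)) (δ β : ℝ) : Prop :=
  0 < δ ∧ 1 ≤ β ∧ ∀ x ∈ frontier D, ∃ l : Euc d, ‖l‖ = 1 ∧
    ∀ y ∈ Metric.ball x δ ∩ frontier D, ∀ n ∈ nsetAll D y, (1 / β : ℝ) ≤ inner ℝ l n

/-- A penalty function `U` for `D` with constant `L`. -/
def IsPenalty {d : ℕ} (D : Set (Euc d)) (r₀ L : ℝ) (U : Euc d → ℝ) : Prop :=
  ContDiff ℝ 1 U ∧ (∀ x, 0 ≤ U x) ∧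
  (∀ x, Metric.infDist x (closure D) ≤ r₀ / 2 →
    U x = Metric.infDist x (closure D) ^ 2) ∧
  (∃ M : ℝ, ∀ x, ‖gradient U x‖ ≤ M) ∧
  LipschitzWith (Real.toNNReal (2 * L)) (gradient U)

/-- `ξ` is the (continuous) solution of the penalized equation
`ξ_t = x₀ + w_t − (m/2)∫₀^t ∇U(ξ_s) ds` on `[0,T]`. -/
def IsPenalizedSol {d : ℕ} (U : Euc d → ℝ) (T : ℝ) (w : ℝ → Euc d) (x₀ : Euc d) (m : ℕ)
    (ξ : ℝ → Euc d) : Prop :=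
  ContinuousOn ξ (Set.Icc 0 T) ∧
  ∀ t ∈ Set.Icc 0 T, ξ t = x₀ + w t - ((m : ℝ) / 2) • ∫ s in (0 : ℝ)..t, gradient U (ξ s)

/-- `w` is `α`-Hölder on `[0,T]` with constant `C`. -/
def IsHolder {d : ℕ} (w : ℝ → Euc d) (T α C : ℝ) : Prop :=
  ∀ s t : ℝ, 0 ≤ s → s ≤ t → t ≤ T → ‖w t - w s‖ ≤ C * (t - s) ^ α

/-- The `α`-Hölder seminorm ‖w‖_α of `w` on `[0,T]`. -/
def holderSemi {d : ℕ} (w : ℝ → Euc d) (T α : ℝ) : ℝ :=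
  sSup {c : ℝ | ∃ s t : ℝ, 0 ≤ s ∧ s < t ∧ t ≤ T ∧ c = ‖w t - w s‖ / (t - s) ^ α}

/-- ε_m^α(w) = (12 e^L / m^α) ‖w‖_α. -/
def epsm {d : ℕ} (w : ℝ → Euc d) (T α L : ℝ) (m : ℕ) : ℝ :=
  12 * Real.exp L / (m : ℝ) ^ α * holderSemi w T α

/-- ‖w‖_T = sup_{0 ≤ t ≤ T} |w_t|. -/
def supNorm {d : ℕ} (w : ℝ → Euc d) (T : ℝ) : ℝ :=
  sSup ((fun t => ‖w t‖) '' Set.Icc 0 T)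

/-- The oscillation Δ_{s,t}(f) = sup{ |f_{t₂} − f_{t₁}| : s ≤ t₁ < t₂ ≤ t }. -/
def osc {d : ℕ} (f : ℝ → Euc d) (s t : ℝ) : ℝ :=
  sSup {c : ℝ | ∃ u v : ℝ, s ≤ u ∧ u < v ∧ v ≤ t ∧ c = ‖f v - f u‖}

/-- `(ξ, φ)` solves the Skorokhod problem `ξ_t = x₀ + w_t + φ_t` on `[0,T]` for
the domain `D`. -/
def IsSkorokhod {d : ℕ} (D : Set (Euc d)) (T : ℝ) (w : ℝ → Euc d) (x₀ : Euc d)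
    (ξ φ : ℝ → Euc d) : Prop :=
  (∀ t ∈ Set.Icc 0 T, ξ t = x₀ + w t + φ t) ∧
  ContinuousOn ξ (Set.Icc 0 T) ∧ (∀ t ∈ Set.Icc 0 T, ξ t ∈ closure D) ∧
  ContinuousOn φ (Set.Icc 0 T) ∧ φ 0 = 0 ∧
  BoundedVariationOn φ (Set.Icc 0 T) ∧
  ∃ S : StieltjesFunction ℝ, (∀ t ∈ Set.Icc 0 T, S t = variationOnFromTo φ (Set.Icc 0 T) 0 t) ∧
    ∃ nv : ℝ → Euc d, Measurable nv ∧
      (∀ t ∈ Set.Icc 0 T, φ t = ∫ s in Set.Icc 0 t, nv s ∂S.measure) ∧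
      (∀ s ∈ Set.Icc 0 T, ξ s ∈ frontier D → nv s ∈ nsetAll D (ξ s)) ∧
      (∀ t ∈ Set.Icc 0 T, variationOnFromTo φ (Set.Icc 0 T) 0 t
          = (S.measure {s | s ∈ Set.Icc 0 t ∧ ξ s ∈ frontier D}).toReal)

open scoped NNReal Topology

theorem gradient_eq_two_smul_sub_of_eventuallyEq_infDist_sq {E : Type*}
    [NormedAddCommGroup E] [InnerProductSpace ℝ E] [ProperSpace E] {F : Set E} {U : E → ℝ}
    {x : E} (hF : IsClosed F) (hFne : F.Nonempty)
    (hU : U =ᶠ[𝓝 x] fun y => infDist y F ^ 2) (hUx : DifferentiableAt ℝ U x) :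
    ∃ p ∈ F, dist x p = infDist x F ∧ gradient U x = (2 : ℝ) • (x - p) := by
  obtain ⟨p, hp, hxp⟩ := hF.exists_infDist_eq_dist hFne x
  refine ⟨p, hp, hxp.symm, ?_⟩
  have hsq : HasFDerivAt (fun y => ‖y - p‖ ^ 2) (2 • innerSL ℝ (x - p)) x := by
    simpa using ((hasFDerivAt_id x).sub_const p).norm_sq
  -- `U` touches `‖· - p‖²` from below at `x`, so their derivatives agree there.
  have hmin : IsLocalMin (fun y => ‖y - p‖ ^ 2 - U y) x := by
    filter_upwards [hU] with y hy
    have hy' : infDist y F ≤ ‖y - p‖ := dist_eq_norm y p ▸ infDist_le_dist_of_mem hp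
    rw [hU.eq_of_nhds, hy, ← dist_eq_norm, ← hxp, sub_self]
    nlinarith [infDist_nonneg (x := y) (s := F)]
  have h0 := hmin.hasFDerivAt_eq_zero (hsq.sub hUx.hasFDerivAt)
  rw [gradient, ← sub_eq_zero.mp h0, LinearIsometryEquiv.symm_apply_eq]
  ext v
  simp

theorem IsPenalty.gradient_eq {d : ℕ} {D : Set (Euc d)} {r₀ L : ℝ} {U : Euc d → ℝ}
    (hU : IsPenalty D r₀ L U) (hD : D.Nonempty) {x : Euc d}
    (hx : infDist x (closure D) < r₀ / 2) :
    ∃ p ∈ closure D, dist x p = infDist x (closure D) ∧ gradient U x = (2 : ℝ) • (x - p) := by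
  refine gradient_eq_two_smul_sub_of_eventuallyEq_infDist_sq isClosed_closure hD.closure ?_
    ((hU.1.differentiable one_ne_zero).differentiableAt)
  filter_upwards [(continuous_infDist_pt _).isOpen_preimage _ isOpen_Iio |>.mem_nhds hx]
    with y hy using hU.2.2.1 y (le_of_lt hy)

theorem ContinuousOn.forall_lt_of_forall_le_imp_lt {f : ℝ → ℝ} {a b c : ℝ}
    (hf : ContinuousOn f (Icc a b)) (ha : f a < c)
    (h : ∀ t ∈ Icc a b, (∀ u ∈ Icc a t, f u ≤ c) → f t < c) :
    ∀ t ∈ Icc a b, f t < c := by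
  by_contra! hex
  set A := Icc a b ∩ f ⁻¹' Ici c
  have hA : IsClosed A := hf.preimage_isClosed_of_isClosed isClosed_Icc isClosed_Ici
  have hAbdd : BddBelow A := ⟨a, fun u hu => hu.1.1⟩
  obtain ⟨⟨hτa, hτb⟩, hτ⟩ : sInf A ∈ A := hA.csInf_mem hex hAbdd
  have hbefore : ∀ u ∈ Ico a (sInf A), f u < c := fun u hu =>
    not_le.mp fun hcu => notMem_of_lt_csInf hu.2 hAbdd ⟨⟨hu.1, hu.2.le.trans hτb⟩, hcu⟩
  have haτ : a ≠ sInf A := fun h => (h ▸ hτ : c ≤ f a).not_gt ha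
  have hτc : f (sInf A) ≤ c :=
    ContinuousWithinAt.closure_le (by rw [closure_Ico haτ]; exact right_mem_Icc.mpr hτa)
      ((hf _ ⟨hτa, hτb⟩).mono (Ico_subset_Icc_self.trans (Icc_subset_Icc_right hτb)))
      continuousWithinAt_const fun u hu => (hbefore u hu).le
  refine (h _ ⟨hτa, hτb⟩ fun u hu => ?_).not_ge hτ
  rcases hu.2.lt_or_eq with hlt | rfl
  · exact (hbefore u ⟨hu.1, hlt⟩).le
  · exact hτc

theorem le_div_add_of_forall_le_one_sub_mul_add {f : ℝ → ℝ} {t κ Δ B : ℝ} (ht : 0 ≤ t)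
    (hκ : 0 < κ) (hΔ : 0 < Δ) (hκΔ : κ * Δ ≤ 1) (hB : 0 ≤ B) (hf0 : f 0 ≤ B / (κ * Δ))
    (hstep : ∀ s u, 0 ≤ s → s ≤ u → u ≤ t → u - s ≤ Δ → f u ≤ (1 - κ * (u - s)) * f s + B) :
    f t ≤ B / (κ * Δ) + B := by
  -- `B / (κ Δ)` is the fixed point of `y ↦ (1 - κ Δ) y + B`, so the bound survives each full step.
  have hgrid : ∀ k : ℕ, k * Δ ≤ t → f (k * Δ) ≤ B / (κ * Δ) := by
    intro k
    induction k with
    | zero => simpa using fun _ => hf0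
    | succ k ih =>
      intro hk
      push_cast at hk ⊢
      have hkt : k * Δ ≤ t := by nlinarith
      calc f ((k + 1) * Δ) ≤ (1 - κ * ((k + 1) * Δ - k * Δ)) * f (k * Δ) + B :=
            hstep _ _ (by positivity) (by nlinarith) hk (by linarith)
        _ = (1 - κ * Δ) * f (k * Δ) + B := by ring_nf
        _ ≤ (1 - κ * Δ) * (B / (κ * Δ)) + B := by
            gcongr
            exact ih hkt
        _ = B / (κ * Δ) := by field_simp; ring
  set k := ⌊t / Δ⌋₊
  have hk : k * Δ ≤ t := (le_div_iff₀ hΔ).mp (Nat.floor_le (by positivity))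
  have hk' : t - k * Δ ≤ Δ := by
    have := (div_lt_iff₀ hΔ).mp (Nat.lt_floor_add_one (t / Δ))
    linarith
  have hκr : κ * (t - k * Δ) ≤ κ * Δ := by gcongr
  have hκr0 : 0 ≤ κ * (t - k * Δ) := by nlinarith
  calc f t ≤ (1 - κ * (t - k * Δ)) * f (k * Δ) + B :=
        hstep _ _ (by positivity) hk le_rfl hk'
    _ ≤ (1 - κ * (t - k * Δ)) * (B / (κ * Δ)) + B := by
        gcongr
        · linarith
        · exact hgrid k hk
    _ ≤ B / (κ * Δ) + B := by nlinarith [mul_nonneg hκr0 (by positivity : 0 ≤ B / (κ * Δ))]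

theorem div_add_self_lt_of_twelve_exp_mul_le {L X ε θ : ℝ} (hL : 0 ≤ L) (hX : 0 ≤ X)
    (hε : 0 < ε) (hXε : 12 * Real.exp L * X ≤ ε) (hθ : θ = (2 * (L + 1))⁻¹) :
    (X + L * θ * (X + θ * ε)) / θ + (X + L * θ * (X + θ * ε)) < ε := by
  have hexp : 6 * L ^ 2 + 12 * L + 12 ≤ 12 * Real.exp L := by
    nlinarith [Real.quadratic_le_exp_of_nonneg hL]
  have hXL : X * (6 * L + 4) * (L + 1) ≤ ε := by nlinarith
  subst hθ
  rw [div_add' _ _ _ (by positivity), div_lt_iff₀ (by positivity)]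
  field_simp
  nlinarith [mul_nonneg hX hL, mul_nonneg (mul_nonneg hX hL) hL,
    mul_pos hε (by linarith : (0 : ℝ) < L + 1)]

theorem holderSemi_nonneg {d : ℕ} (w : ℝ → Euc d) (T α : ℝ) : 0 ≤ holderSemi w T α :=
  Real.sSup_nonneg fun _ ⟨_, _, _, hst, _, hc⟩ =>
    hc ▸ div_nonneg (norm_nonneg _) (Real.rpow_nonneg (sub_nonneg.2 hst.le) _)

theorem IsHolder.holderSemi {d : ℕ} {w : ℝ → Euc d} {T α C : ℝ} (h : IsHolder w T α C) :
    IsHolder w T α (holderSemi w T α) := by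
  intro s t hs hst ht
  rcases hst.lt_or_eq with hlt | rfl
  · rw [← div_le_iff₀ (Real.rpow_pos_of_pos (sub_pos.2 hlt) α)]
    refine le_csSup ⟨C, ?_⟩ ⟨s, t, hs, hlt, ht, rfl⟩
    rintro _ ⟨s', t', hs', hlt', ht', rfl⟩
    exact (div_le_iff₀ (Real.rpow_pos_of_pos (sub_pos.2 hlt') α)).2 (h s' t' hs' hlt'.le ht')
  · simpa using mul_nonneg (holderSemi_nonneg w T α) (Real.rpow_nonneg le_rfl α)

theorem IsHolder.norm_sub_le_of_sub_le {d : ℕ} {w : ℝ → Euc d} {T α C : ℝ}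
    (h : IsHolder w T α C) (hC : 0 ≤ C) (hα : 0 ≤ α) {s t Δ : ℝ} (hs : 0 ≤ s) (hst : s ≤ t)
    (ht : t ≤ T) (hΔ : t - s ≤ Δ) : ‖w t - w s‖ ≤ C * Δ ^ α :=
  (h s t hs hst ht).trans (by gcongr)

theorem twelve_exp_mul_holderSemi_mul_rpow_le_epsm {d : ℕ} (w : ℝ → Euc d) {T α L θ : ℝ}
    (hα : 0 ≤ α) (hθ : 0 ≤ θ) (hθ1 : θ ≤ 1) {m m' : ℕ} (hm : 0 < m) (hmm' : m ≤ m') :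
    12 * Real.exp L * (holderSemi w T α * (θ / m') ^ α) ≤ epsm w T α L m := by
  have hm0 : (0 : ℝ) < m := Nat.cast_pos.2 hm
  have hθm : θ / m' ≤ (m : ℝ)⁻¹ :=
    div_le_div₀ zero_le_one hθ1 hm0 (Nat.cast_le.2 hmm') |>.trans_eq (one_div _)
  have : (θ / m') ^ α ≤ ((m : ℝ) ^ α)⁻¹ := by
    rw [← Real.inv_rpow hm0.le]
    exact Real.rpow_le_rpow (by positivity) hθm hα
  calc 12 * Real.exp L * (holderSemi w T α * (θ / m') ^ α)
      ≤ 12 * Real.exp L * (holderSemi w T α * ((m : ℝ) ^ α)⁻¹) := by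
        have := holderSemi_nonneg w T α
        gcongr
    _ = epsm w T α L m := by rw [epsm]; ring

section PenalizedSol

variable {d : ℕ} {U : Euc d → ℝ} {T : ℝ} {w : ℝ → Euc d} {x₀ : Euc d} {m : ℕ}
  {ξ : ℝ → Euc d} {s t : ℝ}

theorem IsPenalizedSol.apply_zero (hξ : IsPenalizedSol U T w x₀ m ξ) (hT : 0 ≤ T)
    (hw0 : w 0 = 0) : ξ 0 = x₀ := by
  simpa [hw0] using hξ.2 0 ⟨le_rfl, hT⟩

theorem IsPenalizedSol.intervalIntegrable (hξ : IsPenalizedSol U T w x₀ m ξ)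
    (hG : Continuous (gradient U)) (hs : 0 ≤ s) (hst : s ≤ t) (ht : t ≤ T) :
    IntervalIntegrable (fun v => gradient U (ξ v)) volume s t :=
  (hG.comp_continuousOn (hξ.1.mono (Icc_subset_Icc hs ht))).intervalIntegrable_of_Icc hst

theorem IsPenalizedSol.sub_eq (hξ : IsPenalizedSol U T w x₀ m ξ)
    (hG : Continuous (gradient U)) (hs : 0 ≤ s) (hst : s ≤ t) (ht : t ≤ T) :
    ξ t - ξ s = (w t - w s) - ((m : ℝ) / 2) • ∫ v in s..t, gradient U (ξ v) := by
  rw [hξ.2 t ⟨hs.trans hst, ht⟩, hξ.2 s ⟨hs, hst.trans ht⟩,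
    ← intervalIntegral.integral_add_adjacent_intervals
      (hξ.intervalIntegrable hG le_rfl hs (hst.trans ht)) (hξ.intervalIntegrable hG hs hst ht),
    smul_add]
  abel

theorem IsPenalizedSol.norm_sub_le_of_norm_gradient_le (hξ : IsPenalizedSol U T w x₀ m ξ)
    (hG : Continuous (gradient U)) (hs : 0 ≤ s) (hst : s ≤ t) (ht : t ≤ T) {ε : ℝ}
    (hε : ∀ v ∈ Icc s t, ‖gradient U (ξ v)‖ ≤ 2 * ε) :
    ‖ξ t - ξ s‖ ≤ ‖w t - w s‖ + m * (t - s) * ε := by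
  have hI : ‖∫ v in s..t, gradient U (ξ v)‖ ≤ 2 * ε * (t - s) := by
    simpa [abs_of_nonneg (sub_nonneg.2 hst)] using
      intervalIntegral.norm_integral_le_of_norm_le_const fun v hv =>
        hε v (Ioc_subset_Icc_self (uIoc_of_le hst ▸ hv))
  calc ‖ξ t - ξ s‖
      ≤ ‖w t - w s‖ + ‖((m : ℝ) / 2) • ∫ v in s..t, gradient U (ξ v)‖ := by
        rw [hξ.sub_eq hG hs hst ht]
        exact norm_sub_le _ _
    _ ≤ ‖w t - w s‖ + m / 2 * (2 * ε * (t - s)) := by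
        rw [norm_smul, Real.norm_of_nonneg (by positivity)]
        gcongr
    _ = ‖w t - w s‖ + m * (t - s) * ε := by ring

theorem IsPenalizedSol.infDist_le (hξ : IsPenalizedSol U T w x₀ m ξ) {K : ℝ≥0}
    (hG : LipschitzWith K (gradient U)) (hs : 0 ≤ s) (hst : s ≤ t) (ht : t ≤ T)
    (hmst : m * (t - s) ≤ 1) {F : Set (Euc d)} {p : Euc d} (hp : p ∈ F)
    (hps : dist (ξ s) p = infDist (ξ s) F) (hgs : gradient U (ξ s) = (2 : ℝ) • (ξ s - p))
    {R : ℝ} (hR : ∀ v ∈ Icc s t, ‖ξ v - ξ s‖ ≤ R) :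
    infDist (ξ t) F ≤
      (1 - m * (t - s)) * infDist (ξ s) F + ‖w t - w s‖ + m / 2 * (K * R * (t - s)) := by
  have hsplit : ∫ v in s..t, gradient U (ξ v) =
      (∫ v in s..t, (gradient U (ξ v) - gradient U (ξ s))) + (t - s) • gradient U (ξ s) := by
    rw [intervalIntegral.integral_sub (hξ.intervalIntegrable hG.continuous hs hst ht)
      intervalIntegrable_const, intervalIntegral.integral_const, sub_add_cancel]
  set E := ∫ v in s..t, (gradient U (ξ v) - gradient U (ξ s))
  have hE : ‖E‖ ≤ K * R * (t - s) := by
    simpa [abs_of_nonneg (sub_nonneg.2 hst)] using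
      intervalIntegral.norm_integral_le_of_norm_le_const fun v hv =>
        (hG.norm_sub_le _ _).trans (mul_le_mul_of_nonneg_left
          (hR v (Ioc_subset_Icc_self (uIoc_of_le hst ▸ hv))) K.2)
  -- Freezing the gradient at time `s` leaves a pure contraction of `ξ s - p`.
  have hdecomp :
      ξ t - p = (1 - m * (t - s)) • (ξ s - p) + ((w t - w s) - ((m : ℝ) / 2) • E) := by
    rw [← sub_add_sub_cancel _ (ξ s), hξ.sub_eq hG.continuous hs hst ht, hsplit, hgs]
    module
  calc infDist (ξ t) F ≤ ‖ξ t - p‖ := dist_eq_norm (ξ t) p ▸ infDist_le_dist_of_mem hp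
    _ ≤ ‖(1 - m * (t - s)) • (ξ s - p)‖ + (‖w t - w s‖ + ‖((m : ℝ) / 2) • E‖) := by
        rw [hdecomp]
        exact (norm_add_le _ _).trans (add_le_add le_rfl (norm_sub_le _ _))
    _ ≤ (1 - m * (t - s)) * infDist (ξ s) F + ‖w t - w s‖ + m / 2 * (K * R * (t - s)) := by
        rw [norm_smul, norm_smul, Real.norm_of_nonneg (by linarith),
          Real.norm_of_nonneg (by positivity), ← dist_eq_norm, hps]
        have := mul_le_mul_of_nonneg_left hE (by positivity : (0 : ℝ) ≤ m / 2)
        linarith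

theorem IsPenalizedSol.infDist_le_of_forall_infDist_le {D : Set (Euc d)} {r₀ L : ℝ}
    (hξ : IsPenalizedSol U T w x₀ m ξ) (hU : IsPenalty D r₀ L U) (hL : 0 ≤ L)
    (hD : D.Nonempty) (hm : 0 < m) {θ X ε : ℝ} (hθ : 0 < θ) (hθ1 : θ ≤ 1)
    (hX : ∀ s t, 0 ≤ s → s ≤ t → t ≤ T → t - s ≤ θ / m → ‖w t - w s‖ ≤ X)
    (hε : ε < r₀ / 2) (ht : t ∈ Icc 0 T) (h0 : ξ 0 ∈ closure D)
    (hle : ∀ u ∈ Icc 0 t, infDist (ξ u) (closure D) ≤ ε) :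
    infDist (ξ t) (closure D) ≤
      (X + L * θ * (X + θ * ε)) / θ + (X + L * θ * (X + θ * ε)) := by
  have hm' : (0 : ℝ) < m := Nat.cast_pos.2 hm
  have hmθ : (m : ℝ) * (θ / m) = θ := mul_div_cancel₀ θ hm'.ne'
  have hε0 : 0 ≤ ε := infDist_nonneg.trans (hle 0 ⟨le_rfl, ht.1⟩)
  have hX0 : 0 ≤ X := (norm_nonneg _).trans
    (hX 0 0 le_rfl le_rfl (ht.1.trans ht.2) (by simp [hθ.le, hm'.le, div_nonneg]))
  have hLip : LipschitzWith (2 * L).toNNReal (gradient U) := hU.2.2.2.2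
  have hgrad : ∀ u ∈ Icc 0 t, ∃ p ∈ closure D, dist (ξ u) p = infDist (ξ u) (closure D) ∧
      gradient U (ξ u) = (2 : ℝ) • (ξ u - p) :=
    fun u hu => hU.gradient_eq hD ((hle u hu).trans_lt hε)
  have hgrad_le : ∀ u ∈ Icc 0 t, ‖gradient U (ξ u)‖ ≤ 2 * ε := by
    intro u hu
    obtain ⟨p, -, hdist, hgu⟩ := hgrad u hu
    rw [hgu, norm_smul, ← dist_eq_norm, hdist, Real.norm_two]
    exact mul_le_mul_of_nonneg_left (hle u hu) zero_le_two
  have hincr : ∀ s v, 0 ≤ s → s ≤ v → v ≤ t → v - s ≤ θ / m → ‖ξ v - ξ s‖ ≤ X + θ * ε := by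
    intro s v hs hsv hvt hΔ
    refine (hξ.norm_sub_le_of_norm_gradient_le hLip.continuous hs hsv (hvt.trans ht.2)
      fun u hu => hgrad_le u ⟨hs.trans hu.1, hu.2.trans hvt⟩).trans (add_le_add ?_ ?_)
    · exact hX s v hs hsv (hvt.trans ht.2) hΔ
    · have : (m : ℝ) * (v - s) ≤ θ := hmθ ▸ mul_le_mul_of_nonneg_left hΔ hm'.le
      exact mul_le_mul_of_nonneg_right this hε0
  have := le_div_add_of_forall_le_one_sub_mul_add (f := fun u => infDist (ξ u) (closure D))
    (B := X + L * θ * (X + θ * ε))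
    ht.1 hm' (div_pos hθ hm') (hmθ.trans_le hθ1) (by positivity)
    (by simp only [infDist_zero_of_mem h0]; positivity) fun s u hs hsu hut hΔ => ?_
  · rwa [hmθ] at this
  obtain ⟨p, hp, hps, hgs⟩ := hgrad s ⟨hs, hsu.trans hut⟩
  have hmsu : (m : ℝ) * (u - s) ≤ θ := hmθ ▸ mul_le_mul_of_nonneg_left hΔ hm'.le
  refine (hξ.infDist_le hLip hs hsu (hut.trans ht.2) (hmsu.trans hθ1) hp hps hgs
    fun v hv => hincr s v hs hv.1 (hv.2.trans hut) (by linarith [hv.2])).trans ?_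
  rw [Real.coe_toNNReal _ (by positivity)]
  have hw := hX s u hs hsu (hut.trans ht.2) hΔ
  have hR : 0 ≤ X + θ * ε := by positivity
  nlinarith [mul_le_mul_of_nonneg_left hmsu (mul_nonneg hL hR)]

end PenalizedSol

theorem penalized_path_stays_in_tube_general
    (d : ℕ) (D : Set (Euc d)) (hDne : D.Nonempty)
    (r₀ : ℝ)
    (L T α : ℝ) (hL : 0 < L) (hα : 0 < α)
    (U : Euc d → ℝ) (hU : IsPenalty D r₀ L U)
    (w : ℝ → Euc d) (hw0 : w 0 = 0) (hHol : ∃ C : ℝ, IsHolder w T α C)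
    (x₀ : Euc d) (hx₀ : x₀ ∈ closure D)
    (m : ℕ) (hm : 1 ≤ m)
    (hε1 : 0 < epsm w T α L m) (hε2 : epsm w T α L m < r₀ / 2) :
    ∀ m' : ℕ, m ≤ m' → ∀ ξ : ℝ → Euc d, IsPenalizedSol U T w x₀ m' ξ →
      ∀ t ∈ Set.Icc 0 T, Metric.infDist (ξ t) (closure D) < epsm w T α L m := by
  intro m' hmm' ξ hξ t ht
  obtain ⟨C, hC⟩ := hHol
  have hξ0 : ξ 0 = x₀ := hξ.apply_zero (ht.1.trans ht.2) hw0
  set θ := (2 * (L + 1))⁻¹ with hθ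
  have hθ0 : 0 < θ := by positivity
  have hθ1 : θ ≤ 1 := inv_le_one_of_one_le₀ (by linarith)
  refine ((continuous_infDist_pt _).comp_continuousOn hξ.1).forall_lt_of_forall_le_imp_lt
    (by simpa [hξ0, infDist_zero_of_mem hx₀] using hε1) (fun t₂ ht₂ hle => ?_) t ht
  exact (hξ.infDist_le_of_forall_infDist_le hU hL.le hDne (by omega) hθ0 hθ1
    (fun s u hs hsu hu hΔ => hC.holderSemi.norm_sub_le_of_sub_le (holderSemi_nonneg w T α)
      hα.le hs hsu hu hΔ) hε2 ht₂ (hξ0 ▸ hx₀) hle).trans_lt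
    (div_add_self_lt_of_twelve_exp_mul_le hL.le
      (mul_nonneg (holderSemi_nonneg w T α) (by positivity)) hε1
      (twelve_exp_mul_holderSemi_mul_rpow_le_epsm w hα.le hθ0.le hθ1 hm hmm') hθ)

/-- for every `m' ≥ m`, the penalized solution `ξ^{m'}` stays within
distance `ε_m^α(w)` of `D̄` on the whole of `[0,T]`. -/
theorem penalized_path_stays_in_tube
    (d : ℕ) (hd : 1 ≤ d) (D : Set (Euc d)) (hDne : D.Nonempty) (hDopen : IsOpen D)
    (r₀ δ β : ℝ) (hA : CondA D r₀) (hB : CondB D δ β)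
    (L T α : ℝ) (hL : 0 < L) (hT : 0 < T) (hα : 0 < α) (hα2 : α < 1 / 2)
    (U : Euc d → ℝ) (hU : IsPenalty D r₀ L U)
    (w : ℝ → Euc d) (hw0 : w 0 = 0) (hHol : ∃ C : ℝ, IsHolder w T α C)
    (x₀ : Euc d) (hx₀ : x₀ ∈ closure D)
    (m : ℕ) (hm : 1 ≤ m)
    (hε1 : 0 < epsm w T α L m) (hε2 : epsm w T α L m < r₀ / 2) :
    ∀ m' : ℕ, m ≤ m' → ∀ ξ : ℝ → Euc d, IsPenalizedSol U T w x₀ m' ξ →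
      ∀ t ∈ Set.Icc 0 T, Metric.infDist (ξ t) (closure D) < epsm w T α L m :=
  penalized_path_stays_in_tube_general d D hDne r₀ L T α hL hα U hU w hw0 hHol x₀ hx₀ m hm hε1 hε2

end
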